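/- arXiv:2605.03972 — 4 statements merged into one kernel-verified Lean document; each statement's English description precedes it below -/
import Mathlib

section
/- Let F_q be a finite field, let h ∈ F_q[x] be a monic irreducible polynomial of degree D with D ≥ 2 (so h(a) ≠ 0 for every a ∈ F_q), and let f ∈ F_q[x] with deg f < D. Let A ⊆ F_q be a subset with |A| = g, where D ≤ g ≤ q, and suppose that Π_{a∈A}(x − a) ≡ f(x) (mod h(x)) in F_q[x]. Then there exists a polynomial u ∈ F_q[x] with deg u < g − D such that u(a) = −f(a)/h(a) − a^{g−D} for every a ∈ A. Consequently, the received word y = (y_a)_{a∈F_q} ∈ F_q^{F_q} defined by y_a = −f(a)/h(a) − a^{g−D} satisfies d_H(y, RS[q, g−D]_q) ≤ q − g for the full-support Reed–Solomon code of dimension g − D. -/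
open Polynomial

/-!
Put `P = ∏_{a ∈ A} (X - a)`. Since `P` is monic of degree `g`, `deg f < g` and the monic `h` of
degree `D` divides `P - f`, we get `P = Q h + f` with `Q` monic of degree `g - D`. At a point
`a ∈ A` we have `P(a) = 0`, and `h(a) ≠ 0` because an irreducible polynomial of degree `≥ 2` has
no roots, so `Q(a) = -f(a)/h(a)`. Hence `u = Q - X^(g-D)` has degree `< g - D` and its codeword
agrees with the received word on the `g` positions of `A`.
-/

namespace Polynomial

lemma IsMonicOfDegree.degree_sub_X_pow_lt {R : Type*} [Ring R] {p : R[X]} {n : ℕ}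
    (hp : IsMonicOfDegree p n) : (p - X ^ n).degree < (n : WithBot ℕ) := by
  rcases eq_or_ne n 0 with rfl | hn
  · simp [isMonicOfDegree_zero_iff.mp hp]
  · exact degree_le_natDegree.trans_lt (WithBot.coe_lt_coe.mpr (hp.natDegree_sub_X_pow hn))

lemma isMonicOfDegree_prod_X_sub_C {R : Type*} [CommRing R] [Nontrivial R] (s : Finset R) :
    IsMonicOfDegree (∏ a ∈ s, (X - C a)) s.card :=
  ⟨natDegree_finsetProd_X_sub_C_eq_card s id, monic_prod_X_sub_C id s⟩

theorem exists_degree_lt_eval_eq_of_dvd_prod_X_sub_C_sub {F : Type*} [Field F] {h f : F[X]}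
    {A : Finset F} {D : ℕ} (hh : IsMonicOfDegree h D) (hroot : ∀ a ∈ A, h.eval a ≠ 0)
    (hf : f.natDegree < A.card) (hD : D ≤ A.card) (hdvd : h ∣ (∏ a ∈ A, (X - C a)) - f) :
    ∃ u : F[X], u.degree < (A.card - D : ℕ) ∧
      ∀ a ∈ A, u.eval a = -f.eval a / h.eval a - a ^ (A.card - D) := by
  obtain ⟨Q, hQ, hP⟩ := (isMonicOfDegree_prod_X_sub_C A).of_dvd_sub hD hh hf hdvd
  refine ⟨Q - X ^ (A.card - D), hQ.degree_sub_X_pow_lt, fun a ha => ?_⟩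
  have hPa : (∏ b ∈ A, (X - C b)).eval a = 0 := by
    rw [eval_prod]
    exact Finset.prod_eq_zero ha (by simp)
  have hQa : Q.eval a * h.eval a + f.eval a = 0 := by simpa [hP] using hPa
  rw [eval_sub, eval_pow, eval_X, sub_left_inj, eq_div_iff (hroot a ha)]
  linear_combination hQa

end Polynomial

theorem hammingDist_le_card_sub_of_forall_mem_eq {ι : Type*} {β : ι → Type*} [Fintype ι]
    [∀ i, DecidableEq (β i)] {x y : ∀ i, β i} (A : Finset ι) (hxy : ∀ i ∈ A, x i = y i) :
    hammingDist x y ≤ Fintype.card ι - A.card := by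
  classical
  calc hammingDist x y ≤ Aᶜ.card :=
        Finset.card_le_card fun i hi => Finset.mem_compl.mpr fun hiA =>
          (Finset.mem_filter.mp hi).2 (hxy i hiA)
    _ = Fintype.card ι - A.card := Finset.card_compl A

theorem cheng_wan_received_word_general (F : Type*) [Field F] [Fintype F] [DecidableEq F]
    (q : ℕ) (hq : Fintype.card F = q)
    (D g : ℕ) (hD : 2 ≤ D)
    (h : F[X]) (hmonic : h.Monic) (hirr : Irreducible h) (hdegh : h.natDegree = D)
    (f : F[X]) (hf : f.degree < (D : ℕ))
    (A : Finset F) (hA : A.card = g) (hDg : D ≤ g)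
    (hcong : h ∣ (∏ a ∈ A, (X - C a)) - f) :
    (∃ u : F[X], u.degree < ((g - D : ℕ) : ℕ) ∧
      ∀ a ∈ A, u.eval a = - f.eval a / h.eval a - a ^ (g - D)) ∧
    (∃ w : F[X], w.degree < ((g - D : ℕ) : ℕ) ∧
      hammingDist (fun a : F => - f.eval a / h.eval a - a ^ (g - D))
        (fun a : F => w.eval a) ≤ q - g) := by
  subst hq hA
  have hroot : ∀ a ∈ A, h.eval a ≠ 0 := fun a _ =>
    hirr.not_isRoot_of_natDegree_ne_one (by omega)
  have hfA : f.natDegree < A.card := by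
    rcases eq_or_ne f 0 with rfl | hf0
    · rw [natDegree_zero]
      omega
    · exact (natDegree_lt_iff_degree_lt hf0).mpr (hf.trans_le (by exact_mod_cast hDg))
  obtain ⟨u, hu, hueval⟩ :=
    exists_degree_lt_eval_eq_of_dvd_prod_X_sub_C_sub ⟨hdegh, hmonic⟩ hroot hfA hDg hcong
  exact ⟨⟨u, hu, hueval⟩, u, hu,
    hammingDist_le_card_sub_of_forall_mem_eq A fun a ha => (hueval a ha).symm⟩

/-- Construction of the Cheng–Wan received word: if `h` is monic irreducible of degree
`D ≥ 2`, `deg f < D`, `A ⊆ F_q` has size `g` with `D ≤ g ≤ q`, and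
`Π_{a∈A}(x−a) ≡ f (mod h)`, then there is `u` with `deg u < g−D` and
`u(a) = −f(a)/h(a) − a^{g−D}` for all `a ∈ A`; consequently the received word
`y_a = −f(a)/h(a) − a^{g−D}` is within Hamming distance `q − g` of the full-support
Reed–Solomon code of dimension `g − D`. -/
theorem cheng_wan_received_word (F : Type*) [Field F] [Fintype F] [DecidableEq F]
    (q : ℕ) (hq : Fintype.card F = q)
    (D g : ℕ) (hD : 2 ≤ D)
    (h : F[X]) (hmonic : h.Monic) (hirr : Irreducible h) (hdegh : h.natDegree = D)
    (f : F[X]) (hf : f.degree < (D : ℕ))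
    (A : Finset F) (hA : A.card = g) (hDg : D ≤ g) (hgq : g ≤ q)
    (hcong : h ∣ (∏ a ∈ A, (X - C a)) - f) :
    (∃ u : F[X], u.degree < ((g - D : ℕ) : ℕ) ∧
      ∀ a ∈ A, u.eval a = - f.eval a / h.eval a - a ^ (g - D)) ∧
    (∃ w : F[X], w.degree < ((g - D : ℕ) : ℕ) ∧
      hammingDist (fun a : F => - f.eval a / h.eval a - a ^ (g - D))
        (fun a : F => w.eval a) ≤ q - g) :=
  cheng_wan_received_word_general F q hq D g hD h hmonic hirr hdegh f hf A hA hDg hcong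
end

section
/- Let q ≥ 2 be an integer and let τ be a real number with 0 < τ < 1 − 1/q. Then τ^⊥ also satisfies 0 < τ^⊥ < 1 − 1/q, and (τ^⊥)^⊥ = τ. -/
/-- The dual noise parameter `τ^⊥ = (√((q−1)(1−τ)/q) − √(τ/q))²`. -/
noncomputable def tauPerp (q : ℕ) (τ : ℝ) : ℝ :=
  (Real.sqrt (((q : ℝ) - 1) * (1 - τ) / q) - Real.sqrt (τ / q)) ^ 2

/-!
Write `τ = a²`, `1 - τ = b²` with `a, b ≥ 0`, and put `σ = √((q-1)/q)`, `κ = √(1/q)`, so that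
`σ² + κ² = 1`. Then `τ^⊥ = (σb - κa)²`, and `(a, b) ↦ (σb - κa, σa + κb)` is a reflection of the
unit circle, hence an involution. The hypothesis `τ < 1 - 1/q` says exactly `κa < σb`, which keeps
the image in the first quadrant, where taking square roots undoes squaring.
-/

open Real
lemma sqrt_sub_one_div_sq_add_sqrt_one_div_sq {q : ℝ} (hq : 1 ≤ q) :
    √((q - 1) / q) ^ 2 + √(1 / q) ^ 2 = 1 := by
  rw [sq_sqrt (by positivity), sq_sqrt (by positivity)]
  field_simp
  ring

lemma tauPerp_sq {q : ℕ} (hq : 1 ≤ q) {a b : ℝ} (ha : 0 ≤ a) (hb : 0 ≤ b)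
    (hab : a ^ 2 + b ^ 2 = 1) :
    tauPerp q (a ^ 2) = (√((q - 1) / q) * b - √(1 / q) * a) ^ 2 := by
  have hq' : (1 : ℝ) ≤ q := by exact_mod_cast hq
  have h1 : ((q : ℝ) - 1) * (1 - a ^ 2) / q = (q - 1) / q * b ^ 2 := by
    rw [← hab]; ring
  have h2 : a ^ 2 / q = 1 / q * a ^ 2 := by ring
  rw [tauPerp, h1, h2, sqrt_mul (by positivity), sqrt_mul (by positivity), sqrt_sq ha, sqrt_sq hb]

lemma sqrt_one_div_mul_lt_sqrt_sub_one_div_mul_iff {q : ℕ} (hq : 1 ≤ q) {a b : ℝ}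
    (ha : 0 ≤ a) (hb : 0 ≤ b) (hab : a ^ 2 + b ^ 2 = 1) :
    √(1 / q) * a < √((q - 1) / q) * b ↔ a ^ 2 < 1 - 1 / q := by
  have hq' : (1 : ℝ) ≤ q := by exact_mod_cast hq
  rw [← pow_lt_pow_iff_left₀ (by positivity) (by positivity) two_ne_zero, mul_pow, mul_pow,
    sq_sqrt (by positivity), sq_sqrt (by positivity), show b ^ 2 = 1 - a ^ 2 by linarith]
  field_simp
  constructor <;> intro h <;> linarith

lemma tauPerp_tauPerp_sq {q : ℕ} (hq : 1 ≤ q) {a b : ℝ} (ha : 0 ≤ a) (hb : 0 ≤ b)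
    (hab : a ^ 2 + b ^ 2 = 1) (hc : √(1 / q) * a ≤ √((q - 1) / q) * b) :
    tauPerp q (tauPerp q (a ^ 2)) = a ^ 2 := by
  have hσκ := sqrt_sub_one_div_sq_add_sqrt_one_div_sq (q := q) (by exact_mod_cast hq)
  set σ := √((q - 1) / q)
  set κ := √(1 / q)
  have hcd : (σ * b - κ * a) ^ 2 + (σ * a + κ * b) ^ 2 = 1 := by
    linear_combination (a ^ 2 + b ^ 2) * hσκ + hab
  rw [tauPerp_sq hq ha hb hab, tauPerp_sq hq (sub_nonneg.2 hc) (by positivity) hcd]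
  congr 1
  linear_combination a * hσκ

lemma tauPerp_sq_lt {q : ℕ} (hq : 1 ≤ q) {a b : ℝ} (ha : 0 < a) (hb : 0 ≤ b)
    (hab : a ^ 2 + b ^ 2 = 1) (hc : √(1 / q) * a ≤ √((q - 1) / q) * b) :
    tauPerp q (a ^ 2) < 1 - 1 / q := by
  have hq' : (1 : ℝ) ≤ q := by exact_mod_cast hq
  have hb1 : b ≤ 1 := by nlinarith
  have hκa : 0 < √(1 / q) * a := mul_pos (sqrt_pos.2 (by positivity)) ha
  have hσb : √((q - 1) / q) * b ≤ √((q - 1) / q) := mul_le_of_le_one_right (sqrt_nonneg _) hb1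
  calc tauPerp q (a ^ 2) = (√((q - 1) / q) * b - √(1 / q) * a) ^ 2 := tauPerp_sq hq ha.le hb hab
    _ < √((q - 1) / q) ^ 2 := pow_lt_pow_left₀ (by linarith) (sub_nonneg.2 hc) two_ne_zero
    _ = 1 - 1 / q := by rw [sq_sqrt (by positivity), sub_div, div_self (by positivity)]

/-- For `0 < τ < 1 − 1/q`, the dual parameter satisfies `0 < τ^⊥ < 1 − 1/q`
and `(τ^⊥)^⊥ = τ`. -/
theorem tauPerp_involutive (q : ℕ) (hq : 2 ≤ q) (τ : ℝ)
    (h0 : 0 < τ) (h1 : τ < 1 - 1 / q) :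
    (0 < tauPerp q τ ∧ tauPerp q τ < 1 - 1 / q) ∧ tauPerp q (tauPerp q τ) = τ := by
  have hq1 : 1 ≤ q := by omega
  have hτ1 : τ ≤ 1 := by linarith [show (0 : ℝ) ≤ 1 / q by positivity]
  obtain ⟨a, ha, rfl⟩ : ∃ a, 0 < a ∧ a ^ 2 = τ := ⟨√τ, sqrt_pos.2 h0, sq_sqrt h0.le⟩
  have hb : 0 ≤ √(1 - a ^ 2) := sqrt_nonneg _
  have hab : a ^ 2 + √(1 - a ^ 2) ^ 2 = 1 := by rw [sq_sqrt (by linarith)]; ring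
  have hc := (sqrt_one_div_mul_lt_sqrt_sub_one_div_mul_iff hq1 ha.le hb hab).2 h1
  refine ⟨⟨?_, tauPerp_sq_lt hq1 ha hb hab hc.le⟩, tauPerp_tauPerp_sq hq1 ha.le hb hab hc.le⟩
  rw [tauPerp_sq hq1 ha.le hb hab]
  exact pow_pos (sub_pos.2 hc) 2
end

section
/- Let q = p^s be a prime power and let τ be a real number with 0 < τ < 1 − 1/q. Define u : F_q → ℝ by u(0) = √(1−τ) and u(α) = √(τ/(q−1)) for α ≠ 0. Then its normalized Fourier transform û(x) = q^{−1/2} Σ_{y∈F_q} χ_x(y) u(y) satisfies û(0) = √(1−τ^⊥) and û(α) = √(τ^⊥/(q−1)) for every α ≠ 0. -/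
/-- The additive character `χ_y(x) = exp(2πi·tr(x·y)/p)` on `F`, where
`tr : F → ZMod p` is the absolute trace. -/
noncomputable def addChar (p : ℕ) (F : Type*) [Field F] [Fintype F] [Algebra (ZMod p) F]
    (y x : F) : ℂ :=
  Complex.exp (2 * Real.pi * Complex.I *
    ((Algebra.trace (ZMod p) F (x * y)).val : ℂ) / p)

/-!
Write `b = √(τ/(q-1))`, so that `u = (√(1-τ) - b)·δ₀ + b`. Since `y ↦ χ(tr y)` is a nontrivial,
hence primitive, character of `F`, the sum `∑_y χ_x(y)` is `q` at `x = 0` and vanishes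
elsewhere; thus `√q · û(0) = √(1-τ) + (q-1)b` and `√q · û(x) = √(1-τ) - b` for `x ≠ 0`.
On the other hand `τ^⊥ = (q-1)(√(1-τ) - b)²/q`, and `(1-τ) + (q-1)b² = 1` turns `1 - τ^⊥`
into `(√(1-τ) + (q-1)b)²/q`; the bound `τ < 1 - 1/q` is exactly `b ≤ √(1-τ)`, which fixes
the sign of the square root of `τ^⊥/(q-1)`.
-/

open Finset

section Arithmetic

variable {q : ℕ} {τ : ℝ}

lemma tauPerp_eq_mul_sq (hq : 1 < q) :
    tauPerp q τ = ((q : ℝ) - 1) / q * (√(1 - τ) - √(τ / ((q : ℝ) - 1))) ^ 2 := by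
  have hq1 : (0 : ℝ) < (q : ℝ) - 1 := sub_pos.2 (by exact_mod_cast hq)
  have hτ : √(τ / q) = √((q : ℝ) - 1) * √(τ / ((q : ℝ) - 1)) / √q := by
    rw [← Real.sqrt_mul hq1.le, mul_div_cancel₀ _ hq1.ne', Real.sqrt_div' _ (Nat.cast_nonneg q)]
  rw [tauPerp, hτ, Real.sqrt_div' _ (Nat.cast_nonneg q), Real.sqrt_mul hq1.le,
    ← sub_div, ← mul_sub, div_pow, mul_pow, Real.sq_sqrt hq1.le, Real.sq_sqrt (Nat.cast_nonneg q)]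
  ring

lemma sqrt_one_sub_tauPerp (hq : 1 < q) (h0 : 0 ≤ τ) (h1 : τ ≤ 1) :
    √(1 - tauPerp q τ) = (√(1 - τ) + ((q : ℝ) - 1) * √(τ / ((q : ℝ) - 1))) / √q := by
  have hq1 : (0 : ℝ) < (q : ℝ) - 1 := sub_pos.2 (by exact_mod_cast hq)
  have hunit : √(1 - τ) ^ 2 + ((q : ℝ) - 1) * √(τ / ((q : ℝ) - 1)) ^ 2 = 1 := by
    rw [Real.sq_sqrt (sub_nonneg.2 h1), Real.sq_sqrt (div_nonneg h0 hq1.le)]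
    field_simp
    ring
  have hsq : 1 - tauPerp q τ
      = ((√(1 - τ) + ((q : ℝ) - 1) * √(τ / ((q : ℝ) - 1))) / √q) ^ 2 := by
    rw [tauPerp_eq_mul_sq hq, div_pow, Real.sq_sqrt (Nat.cast_nonneg q)]
    field_simp
    linear_combination (-(q : ℝ)) * hunit
  rw [hsq, Real.sqrt_sq (by positivity)]

lemma sqrt_tauPerp_div (hq : 1 < q) (h1 : τ ≤ 1 - 1 / q) :
    √(tauPerp q τ / ((q : ℝ) - 1)) = (√(1 - τ) - √(τ / ((q : ℝ) - 1))) / √q := by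
  have hq1 : (0 : ℝ) < (q : ℝ) - 1 := sub_pos.2 (by exact_mod_cast hq)
  have hb_le : √(τ / ((q : ℝ) - 1)) ≤ √(1 - τ) := by
    refine Real.sqrt_le_sqrt ((div_le_iff₀ hq1).2 ?_)
    have := mul_le_mul_of_nonneg_right h1 (Nat.cast_nonneg (α := ℝ) q)
    rw [sub_mul, one_div_mul_cancel (by linarith)] at this
    nlinarith
  have hcancel : ((q : ℝ) - 1) / q * (√(1 - τ) - √(τ / ((q : ℝ) - 1))) ^ 2 / ((q : ℝ) - 1)
      = (√(1 - τ) - √(τ / ((q : ℝ) - 1))) ^ 2 / q := by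
    field_simp
  rw [tauPerp_eq_mul_sq hq, hcancel, Real.sqrt_div' _ (Nat.cast_nonneg q),
    Real.sqrt_sq (sub_nonneg.2 hb_le)]

end Arithmetic

lemma sum_mul_eq_of_eq_off_zero {F R : Type*} [Fintype F] [Zero F] [CommRing R]
    (f u : F → R) {b : R} (hu : ∀ y, y ≠ 0 → u y = b) :
    ∑ y, f y * u y = f 0 * (u 0 - b) + b * ∑ y, f y := by
  calc ∑ y, f y * u y = ∑ y, (f y * (u y - b) + b * f y) := by
        congr! 1 with y; ring
    _ = f 0 * (u 0 - b) + b * ∑ y, f y := by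
        rw [sum_add_distrib, ← mul_sum,
          sum_eq_single 0 (fun y _ hy ↦ by rw [hu y hy, sub_self, mul_zero]) (by simp)]

section Characters

variable (p : ℕ) (F : Type*) [Field F] [Algebra (ZMod p) F]

noncomputable def traceAddChar [NeZero p] : AddChar F ℂ :=
  ZMod.stdAddChar.compAddMonoidHom (Algebra.trace (ZMod p) F).toAddMonoidHom

lemma addChar_eq_traceAddChar [NeZero p] [Fintype F] (x y : F) :
    addChar p F x y = traceAddChar p F (y * x) := by
  simp [addChar, traceAddChar, ZMod.stdAddChar_apply, ZMod.toCircle_apply]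

variable [Fact p.Prime]

lemma traceAddChar_isPrimitive [Fintype F] : (traceAddChar p F).IsPrimitive := by
  refine AddChar.IsPrimitive.of_ne_one fun h ↦ ?_
  obtain ⟨a, ha⟩ := Algebra.trace_surjective (ZMod p) F 1
  have : ZMod.stdAddChar (1 : ZMod p) = ZMod.stdAddChar (0 : ZMod p) := by
    simpa [traceAddChar, ha] using DFunLike.congr_fun h a
  exact one_ne_zero (ZMod.injective_stdAddChar this)

variable [Fintype F] [DecidableEq F]

lemma sum_addChar (x : F) :
    ∑ y, addChar p F x y = if x = 0 then (Fintype.card F : ℂ) else 0 := by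
  simp_rw [addChar_eq_traceAddChar]
  rw [AddChar.sum_mulShift x (traceAddChar_isPrimitive p F)]
  push_cast
  rfl

lemma sum_addChar_mul_of_eq_off_zero (x : F) {u : F → ℂ} {a b : ℂ} (hu0 : u 0 = a)
    (hu : ∀ α, α ≠ 0 → u α = b) :
    ∑ y, addChar p F x y * u y
      = if x = 0 then a + ((Fintype.card F : ℂ) - 1) * b else a - b := by
  rw [sum_mul_eq_of_eq_off_zero _ _ hu, sum_addChar, hu0, addChar_eq_traceAddChar, zero_mul,
    AddChar.map_zero_eq_one]
  split_ifs <;> ring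

end Characters

/-- The normalized Fourier transform of the Bernoulli amplitude
`u(0) = √(1−τ)`, `u(α) = √(τ/(q−1))` (α ≠ 0) is the Bernoulli amplitude with
parameter `τ^⊥`: `û(0) = √(1−τ^⊥)` and `û(α) = √(τ^⊥/(q−1))` for `α ≠ 0`. -/
theorem fourier_bernoulli_amplitude (p : ℕ) [Fact p.Prime] (F : Type*) [Field F] [Fintype F]
    [DecidableEq F] [Algebra (ZMod p) F] (q : ℕ) (hq : Fintype.card F = q)
    (τ : ℝ) (h0 : 0 < τ) (h1 : τ < 1 - 1 / q)
    (u : F → ℝ) (hu0 : u 0 = Real.sqrt (1 - τ))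
    (hu : ∀ α : F, α ≠ 0 → u α = Real.sqrt (τ / ((q : ℝ) - 1)))
    (x : F) :
    (1 / (Real.sqrt q : ℂ)) * ∑ y : F, addChar p F x y * (u y : ℂ)
      = if x = 0 then ((Real.sqrt (1 - tauPerp q τ) : ℝ) : ℂ)
        else ((Real.sqrt (tauPerp q τ / ((q : ℝ) - 1)) : ℝ) : ℂ) := by
  have hq1 : 1 < q := hq ▸ Fintype.one_lt_card
  have hτ1 : τ ≤ 1 := by
    have : (0 : ℝ) ≤ 1 / q := by positivity
    linarith
  have hsqrt : (√q : ℂ) ≠ 0 := by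
    exact_mod_cast (Real.sqrt_pos.2 (Nat.cast_pos.2 (zero_lt_one.trans hq1))).ne'
  rw [sum_addChar_mul_of_eq_off_zero p F x (u := fun y ↦ (u y : ℂ)) (congrArg _ hu0)
    (fun α hα ↦ congrArg _ (hu α hα)), hq]
  split_ifs
  · rw [sqrt_one_sub_tauPerp hq1 h0.le hτ1]
    push_cast
    field_simp
  · rw [sqrt_tauPerp_div hq1 h1.le]
    push_cast
    field_simp
end

section
/- Let F_q be a finite field of size q, let n ≥ k ≥ 1 be integers, let G : F_q^n → F_q^k be a surjective linear map, let u₀ ∈ F_q^k, let t be a natural number, and suppose there exists z ∈ F_q^n with Gz = u₀ and ‖z‖ = t. Define T = {x ∈ F_q^n : Gx ≠ u₀ or ‖x‖ = t}. Then q^{−k/2} · Σ_{u ∈ F_q^k} √(|{x ∈ T : Gx = u}| / |T|) ≥ 1 − q^{−k}. -/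
/-!
Every fibre of the surjective map `G` has `qⁿ⁻ᵏ` points and `|T| ≤ qⁿ`, while for `u ≠ u₀` the
whole fibre over `u` lies in `T`. So each of these `qᵏ - 1` summands is at least `q^{-k/2}`, and
`Γ ≥ q^{-k/2} (qᵏ - 1) q^{-k/2} = 1 - q^{-k}`.
-/

open Finset

section
variable {α β 𝓕 : Type*} [AddGroup α] [Fintype α] [AddMonoid β] [Fintype β] [DecidableEq β]
  [FunLike 𝓕 α β] [AddMonoidHomClass 𝓕 α β]

theorem AddMonoidHom.card_mul_card_fiber_of_surjective (f : 𝓕) (hf : Function.Surjective f)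
    (u : β) : Fintype.card β * #{x | f x = u} = Fintype.card α := by
  have hfibres : ∀ v, #{x | f x = v} = #{x | f x = u} := fun v ↦
    AddMonoidHom.card_fiber_eq_of_mem_range f (hf v) (hf u)
  calc Fintype.card β * #{x | f x = u} = ∑ v, #{x | f x = v} := by
        simp only [hfibres, sum_const, card_univ, smul_eq_mul]
    _ = Fintype.card α := (card_eq_sum_card_fiberwise fun _ _ ↦ mem_univ _).symm

/-- The summand at `u` is the norm of the dual coset state `W_u` of the normalized indicator of
`T`. -/
noncomputable def pgmOverlap (f : α → β) (T : Finset α) : ℝ :=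
  (√(Fintype.card β : ℝ))⁻¹ * ∑ u, √((#{x ∈ T | f x = u} : ℝ) / #T)

theorem inv_sqrt_card_le_sqrt_card_fiber_div (f : 𝓕) (hf : Function.Surjective f) {u₀ u : β}
    {T : Finset α} (hT : T.Nonempty) (hT₀ : ∀ x, f x ≠ u₀ → x ∈ T) (hu : u ≠ u₀) :
    (√(Fintype.card β : ℝ))⁻¹ ≤ √((#{x ∈ T | f x = u} : ℝ) / #T) := by
  have hfibre : ({x ∈ T | f x = u} : Finset α) = ({x | f x = u} : Finset α) := by
    ext x
    simp only [mem_filter, mem_univ, true_and]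
    exact ⟨And.right, fun hx ↦ ⟨hT₀ x (hx ▸ hu), hx⟩⟩
  have hcard : (#T : ℝ) ≤ Fintype.card β * #{x | f x = u} := by
    exact_mod_cast (AddMonoidHom.card_mul_card_fiber_of_surjective f hf u).symm ▸ card_le_univ T
  rw [hfibre, ← Real.sqrt_inv]
  gcongr
  rw [inv_eq_one_div, div_le_div_iff₀ (by positivity) (by exact_mod_cast hT.card_pos)]
  linarith

theorem one_sub_inv_card_le_pgmOverlap (f : 𝓕) (hf : Function.Surjective f) {u₀ : β}
    {T : Finset α} (hT : T.Nonempty) (hT₀ : ∀ x, f x ≠ u₀ → x ∈ T) :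
    1 - (Fintype.card β : ℝ)⁻¹ ≤ pgmOverlap f T := by
  set N : ℝ := (Fintype.card β : ℝ)
  have hN : 0 < N := Nat.cast_pos.2 Fintype.card_pos
  have hsum : (N - 1) * (√N)⁻¹ ≤ ∑ u, √((#{x ∈ T | f x = u} : ℝ) / #T) :=
    calc (N - 1) * (√N)⁻¹ = #(univ.erase u₀) • (√N)⁻¹ := by
          rw [card_erase_of_mem (mem_univ _), card_univ, nsmul_eq_mul,
            Nat.cast_sub Fintype.card_pos, Nat.cast_one]
      _ ≤ ∑ u ∈ univ.erase u₀, √((#{x ∈ T | f x = u} : ℝ) / #T) :=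
          card_nsmul_le_sum _ _ _ fun _ hu ↦
            inv_sqrt_card_le_sqrt_card_fiber_div f hf hT hT₀ (ne_of_mem_erase hu)
      _ ≤ _ := sum_le_sum_of_subset_of_nonneg (subset_univ _) fun _ _ _ ↦ Real.sqrt_nonneg _
  calc 1 - N⁻¹ = (√N)⁻¹ * ((N - 1) * (√N)⁻¹) := by
        rw [mul_comm, mul_assoc, ← mul_inv, Real.mul_self_sqrt hN.le, sub_mul, one_mul,
          mul_inv_cancel₀ hN.ne']
    _ ≤ pgmOverlap f T := mul_le_mul_of_nonneg_left hsum (by positivity)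

end

theorem pgm_overlap_lower_bound_general (F : Type*) [Field F] [Fintype F] [DecidableEq F]
    (q : ℕ) (hq : Fintype.card F = q) (n k : ℕ)
    (G : (Fin n → F) →ₗ[F] (Fin k → F)) (hG : Function.Surjective G)
    (u₀ : Fin k → F) (t : ℕ)
    (z : Fin n → F) (hz₂ : hammingNorm z = t) :
    1 - ((q : ℝ) ^ k)⁻¹
      ≤ (Real.sqrt ((q : ℝ) ^ k))⁻¹ *
        ∑ u : Fin k → F,
          Real.sqrt
            ((Nat.card {x : Fin n → F // (G x ≠ u₀ ∨ hammingNorm x = t) ∧ G x = u} : ℝ)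
              / (Nat.card {x : Fin n → F // G x ≠ u₀ ∨ hammingNorm x = t} : ℝ)) := by
  have hcard : ((q : ℝ) ^ k) = Fintype.card (Fin k → F) := by simp [hq]
  let T : Finset (Fin n → F) := {x | G x ≠ u₀ ∨ hammingNorm x = t}
  have hT : T.Nonempty := ⟨z, by simp [T, hz₂]⟩
  have hΓ := one_sub_inv_card_le_pgmOverlap G hG (u₀ := u₀) hT fun x hx ↦ by simp [T, hx]
  simpa only [pgmOverlap, hcard, T, filter_filter, Nat.card_eq_fintype_card,
    Fintype.card_subtype] using hΓ

/-- The diagonal overlap of the Pretty Good Measurement in Regev's reduction: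
with `T = {x : Gx ≠ u₀ or ‖x‖ = t}` the support of the error amplitude,
`Γ = q^{−k/2} · Σ_u √(|{x ∈ T : Gx = u}| / |T|) ≥ 1 − q^{−k}`. -/
theorem pgm_overlap_lower_bound (F : Type*) [Field F] [Fintype F] [DecidableEq F]
    (q : ℕ) (hq : Fintype.card F = q) (n k : ℕ) (hk : 1 ≤ k) (hnk : k ≤ n)
    (G : (Fin n → F) →ₗ[F] (Fin k → F)) (hG : Function.Surjective G)
    (u₀ : Fin k → F) (t : ℕ)
    (z : Fin n → F) (hz₁ : G z = u₀) (hz₂ : hammingNorm z = t) :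
    1 - ((q : ℝ) ^ k)⁻¹
      ≤ (Real.sqrt ((q : ℝ) ^ k))⁻¹ *
        ∑ u : Fin k → F,
          Real.sqrt
            ((Nat.card {x : Fin n → F // (G x ≠ u₀ ∨ hammingNorm x = t) ∧ G x = u} : ℝ)
              / (Nat.card {x : Fin n → F // G x ≠ u₀ ∨ hammingNorm x = t} : ℝ)) :=
  pgm_overlap_lower_bound_general F q hq n k G hG u₀ t z hz₂
end
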